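/- arXiv:2102.02187 — 3 statements merged into one kernel-verified Lean document; each statement's English description precedes it below -/
import Mathlib

section
/- Let ρ^{AB} be a nonzero positive semidefinite operator on A⊗B, where A and B are finite-dimensional complex Hilbert spaces. Then Tr[(ρ^B)²] ≤ |A|·Tr[(ρ^{AB})²] and Tr[(ρ^{AB})²] ≤ |A|·Tr[(ρ^B)²]; equivalently, 1/|A| ≤ Tr[(ρ^{AB})²]/Tr[(ρ^B)²] ≤ |A|. -/
open scoped Kronecker ComplexOrder
open MeasureTheory Matrix

noncomputable section

namespace QIT

section UnitaryTopology

variable (n : Type*) [Fintype n] [DecidableEq n]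

instance : MeasurableSpace (Matrix.unitaryGroup n ℂ) := borel _
instance : BorelSpace (Matrix.unitaryGroup n ℂ) := ⟨rfl⟩

instance : IsTopologicalGroup (Matrix.unitaryGroup n ℂ) where
  continuous_mul := by
    apply Continuous.subtype_mk
    exact Continuous.matrix_mul (continuous_subtype_val.comp continuous_fst)
      (continuous_subtype_val.comp continuous_snd)
  continuous_inv := by
    have h : Continuous fun U : Matrix.unitaryGroup n ℂ => star U :=
      Continuous.subtype_mk (continuous_star.comp continuous_subtype_val) _
    simpa [← Unitary.star_eq_inv] using h

instance : CompactSpace (Matrix.unitaryGroup n ℂ) := by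
  apply isCompact_iff_compactSpace.mp
  have hclosed : IsClosed ((Matrix.unitaryGroup n ℂ : Set (Matrix n n ℂ))) := by
    have h1 : IsClosed {M : Matrix n n ℂ | star M * M = 1} :=
      isClosed_eq (Continuous.matrix_mul continuous_star continuous_id) continuous_const
    have h2 : IsClosed {M : Matrix n n ℂ | M * star M = 1} :=
      isClosed_eq (Continuous.matrix_mul continuous_id continuous_star) continuous_const
    have heq : (Matrix.unitaryGroup n ℂ : Set (Matrix n n ℂ))
        = {M | star M * M = 1} ∩ {M | M * star M = 1} := by
      ext M; exact Unitary.mem_iff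
    rw [heq]; exact h1.inter h2
  have hsub : (Matrix.unitaryGroup n ℂ : Set (Matrix n n ℂ)) ⊆
      Set.univ.pi fun _ : n => Set.univ.pi fun _ : n => Metric.closedBall (0 : ℂ) 1 := by
    intro U hU
    refine Set.mem_pi.mpr ?_
    intro i _
    rw [Set.mem_pi]
    intro j _
    rw [Metric.mem_closedBall, dist_zero_right]
    exact entry_norm_bound_of_unitary hU i j
  exact IsCompact.of_isClosed_subset
    (isCompact_univ_pi fun _ => isCompact_univ_pi fun _ => isCompact_closedBall _ _)
    hclosed hsub

/-- The Haar probability measure on the unitary group. -/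
def haarU : Measure (Matrix.unitaryGroup n ℂ) :=
  Measure.haarMeasure ⟨⟨Set.univ, isCompact_univ⟩, by simp⟩

end UnitaryTopology


section Defs

/-- Entrywise (Bochner) integral of a matrix-valued function. -/
def mInt {G : Type*} [MeasurableSpace G] (mu : Measure G) {m : Type*}
    (f : G → Matrix m m ℂ) : Matrix m m ℂ :=
  fun i j => ∫ U, f U i j ∂mu

/-- Partial trace over the first tensor factor. -/
def ptL {A B : Type*} [Fintype A] (M : Matrix (A × B) (A × B) ℂ) : Matrix B B ℂ :=
  fun i j => ∑ a, M (a, i) (a, j)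

/-- Partial trace over the second tensor factor. -/
def ptR {A B : Type*} [Fintype B] (M : Matrix (A × B) (A × B) ℂ) : Matrix A A ℂ :=
  fun i j => ∑ b, M (i, b) (j, b)

/-- Extension `T ⊗ id` of a superoperator to an additional tensor factor. -/
def matExt {A E R : Type*} (T : Matrix A A ℂ → Matrix E E ℂ)
    (M : Matrix (A × R) (A × R) ℂ) : Matrix (E × R) (E × R) ℂ :=
  fun p q => T (fun a b => M (a, p.2) (b, q.2)) p.1 q.1

/-- Linearity of a superoperator. -/
def IsLinMap {A E : Type*} (T : Matrix A A ℂ → Matrix E E ℂ) : Prop :=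
  ∀ (c : ℂ) (M N : Matrix A A ℂ), T (c • M + N) = c • T M + T N

/-- Complete positivity of a superoperator: it is linear and all its extensions by
finite-dimensional identities preserve positive semidefiniteness. -/
def IsCPMap {A E : Type*} [Fintype A] [Fintype E] (T : Matrix A A ℂ → Matrix E E ℂ) : Prop :=
  IsLinMap T ∧ ∀ (n : ℕ) (M : Matrix (A × Fin n) (A × Fin n) ℂ),
    M.PosSemidef → (matExt T M).PosSemidef

/-- Trace preservation. -/
def IsTPMap {A E : Type*} [Fintype A] [Fintype E] (T : Matrix A A ℂ → Matrix E E ℂ) : Prop :=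
  ∀ M : Matrix A A ℂ, (T M).trace = M.trace

/-- Spectral (Moore–Penrose) real power of a Hermitian matrix: the eigenvalue `λ` is mapped to
`λ ^ r` if `λ ≠ 0`, and to `0` otherwise.  Junk value `0` on non-Hermitian input. -/
def mpow {n : Type*} [Fintype n] [DecidableEq n] (M : Matrix n n ℂ) (r : ℝ) : Matrix n n ℂ :=
  if h : M.IsHermitian then
    (h.eigenvectorUnitary : Matrix n n ℂ) *
      Matrix.diagonal (fun i =>
        Complex.ofReal (if h.eigenvalues i = 0 then (0 : ℝ) else h.eigenvalues i ^ r)) *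
      star (h.eigenvectorUnitary : Matrix n n ℂ)
  else 0

/-- `ρ_δ`: the matrix obtained from a Hermitian matrix by zeroing out a maximal set of
smallest eigenvalues whose sum is at most `δ` (ties between equal eigenvalues broken by a
fixed enumeration of the index type).  Junk value `0` on non-Hermitian input. -/
def dTrunc {n : Type*} [Fintype n] [DecidableEq n] (M : Matrix n n ℂ) (δ : ℝ) :
    Matrix n n ℂ :=
  if h : M.IsHermitian then
    (h.eigenvectorUnitary : Matrix n n ℂ) *
      Matrix.diagonal (fun i =>
        if (∑ j ∈ Finset.univ.filter (fun j =>
              h.eigenvalues j < h.eigenvalues i ∨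
                (h.eigenvalues j = h.eigenvalues i ∧
                  Fintype.equivFin n j ≤ Fintype.equivFin n i)), h.eigenvalues j) ≤ δ
        then (0 : ℂ) else (h.eigenvalues i : ℂ)) *
      star (h.eigenvectorUnitary : Matrix n n ℂ)
  else 0

/-- Squared Schatten 2-norm `‖M‖₂² = Tr[MᴴM]`. -/
def sn2sq {n : Type*} [Fintype n] (M : Matrix n n ℂ) : ℝ := (Matrix.trace (Mᴴ * M)).re

/-- Trace norm `‖M‖₁ = Tr √(MᴴM)`. -/
def traceNorm {n : Type*} [Fintype n] [DecidableEq n] (M : Matrix n n ℂ) : ℝ :=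
  (Matrix.trace (mpow (Mᴴ * M) (1 / 2))).re

/-- The conditioned state `(I ⊗ (ρ^B_δ)^{-1/4}) ρ^{AB} (I ⊗ (ρ^B_δ)^{-1/4})`. -/
def tildeCond {A B : Type*} [Fintype A] [DecidableEq A] [Fintype B] [DecidableEq B]
    (ρ : Matrix (A × B) (A × B) ℂ) (δ : ℝ) : Matrix (A × B) (A × B) ℂ :=
  ((1 : Matrix A A ℂ) ⊗ₖ mpow (dTrunc (ptL ρ) δ) (-(1 / 4))) * ρ *
    ((1 : Matrix A A ℂ) ⊗ₖ mpow (dTrunc (ptL ρ) δ) (-(1 / 4)))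

/-- The δ-tilde conditional 2-entropy `H̃_{2,δ}(A|B)_ρ` of a state on `A ⊗ B`
(conditioning on the second factor). -/
def tildeH2 {A B : Type*} [Fintype A] [DecidableEq A] [Fintype B] [DecidableEq B]
    (ρ : Matrix (A × B) (A × B) ℂ) (δ : ℝ) : ℝ :=
  - Real.logb 2 ((Matrix.trace (tildeCond ρ δ * tildeCond ρ δ)).re)

/-- The unconditional tilde 2-entropy `H̃_2(A)_σ = -log Tr[σ²]`. -/
def h2un {A : Type*} [Fintype A] (σ : Matrix A A ℂ) : ℝ :=
  - Real.logb 2 ((Matrix.trace (σ * σ)).re)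

/-- The max entropy `H_max(A)_σ = 2 log Tr[√σ]`. -/
def hMax {A : Type*} [Fintype A] [DecidableEq A] (σ : Matrix A A ℂ) : ℝ :=
  2 * Real.logb 2 ((Matrix.trace (mpow σ (1 / 2))).re)

/-- The maximally entangled state `Φ^{AA'}`. -/
def maxEnt (A : Type*) [Fintype A] [DecidableEq A] : Matrix (A × A) (A × A) ℂ :=
  fun p q => if p.1 = p.2 ∧ q.1 = q.2 then (Fintype.card A : ℂ)⁻¹ else 0

/-- The swap operator `F^{AA'}`. -/
def swapOp (A : Type*) [DecidableEq A] : Matrix (A × A) (A × A) ℂ :=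
  fun p q => if p.1 = q.2 ∧ p.2 = q.1 then 1 else 0

/-- The Choi state of a superoperator, on `A ⊗ E`. -/
def choi {A E : Type*} [Fintype A] [DecidableEq A]
    (T : Matrix A A ℂ → Matrix E E ℂ) : Matrix (A × E) (A × E) ℂ :=
  fun p q => (Fintype.card A : ℂ)⁻¹ * T (Matrix.single p.1 q.1 1) p.2 q.2

/-- A (mixed) quantum state. -/
def IsState {A : Type*} [Fintype A] (ρ : Matrix A A ℂ) : Prop :=
  ρ.PosSemidef ∧ ρ.trace = 1

/-- A pure quantum state (rank-one projection). -/
def IsPureState {A : Type*} [Fintype A] (ψ : Matrix A A ℂ) : Prop :=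
  ψ.PosSemidef ∧ ψ * ψ = ψ ∧ ψ.trace = 1


/-- The Haar measure on the unitary group is a probability measure. -/
instance {n : Type*} [Fintype n] [DecidableEq n] : IsProbabilityMeasure (haarU n) :=
  ⟨Measure.haarMeasure_self⟩

/-- marginal over the middle factor: `((X × Y) × Z) ↦ (X × Z)`. -/
def m13 {X Y Z : Type*} [Fintype Y] (M : Matrix ((X × Y) × Z) ((X × Y) × Z) ℂ) :
    Matrix (X × Z) (X × Z) ℂ :=
  fun p q => ∑ y, M ((p.1, y), p.2) ((q.1, y), q.2)

/-- marginal over the first of three factors: `((X × Y) × Z) ↦ (Y × Z)`. -/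
def m23 {X Y Z : Type*} [Fintype X] (M : Matrix ((X × Y) × Z) ((X × Y) × Z) ℂ) :
    Matrix (Y × Z) (Y × Z) ℂ :=
  fun p q => ∑ x, M ((x, p.1), p.2) ((x, q.1), q.2)

/-- marginal over the first component of the second factor:
`(X × (Y × Z)) ↦ (X × Z)`. -/
def m2of2 {X Y Z : Type*} [Fintype Y] (M : Matrix (X × (Y × Z)) (X × (Y × Z)) ℂ) :
    Matrix (X × Z) (X × Z) ℂ :=
  fun p q => ∑ y, M (p.1, (y, p.2)) (q.1, (y, q.2))

/-- `(F^{AA'})^b`: the swap operator if `b = true`, the identity otherwise. -/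
def swapPow (A : Type*) [Fintype A] [DecidableEq A] (b : Bool) : Matrix (A × A) (A × A) ℂ :=
  if b then swapOp A else 1

/-- `I_S ⊗ V` for a rectangular matrix `V`. -/
def idTensor {S α β : Type*} [DecidableEq S] (V : Matrix α β ℂ) :
    Matrix (S × α) (S × β) ℂ := fun p q => if p.1 = q.1 then V p.2 q.2 else 0

/-- `Ω^{A'A''} ⊗ Δ^{B'B''}` rearranged as an operator on `(A''⊗B'') ⊗ (A'⊗B')`. -/
def pairState {A A' B B' : Type*} (Ω : Matrix (A' × A) (A' × A) ℂ)
    (Δ : Matrix (B' × B) (B' × B) ℂ) :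
    Matrix ((A × B) × (A' × B')) ((A × B) × (A' × B')) ℂ :=
  fun p q => Ω (p.2.1, p.1.1) (q.2.1, q.1.1) * Δ (p.2.2, p.1.2) (q.2.2, q.1.2)

/-- interleave two bipartite operators on `A⊗X` and `B⊗Y` as an operator on
`(A⊗B) ⊗ (X⊗Y)`. -/
def arrange2 {A B X Y : Type*} (M : Matrix (A × X) (A × X) ℂ) (N : Matrix (B × Y) (B × Y) ℂ) :
    Matrix ((A × B) × (X × Y)) ((A × B) × (X × Y)) ℂ :=
  fun p q => M (p.1.1, p.2.1) (q.1.1, q.2.1) * N (p.1.2, p.2.2) (q.1.2, q.2.2)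

/-- conjugate the first factor of a bipartite operator by a rectangular matrix `U : A → A'`. -/
def encApply {A A' X : Type*} [Fintype A] (U : Matrix A' A ℂ) (M : Matrix (A × X) (A × X) ℂ) :
    Matrix (A' × X) (A' × X) ℂ :=
  fun p q => ∑ a, ∑ a', U p.1 a * M (a, p.2) (a', q.2) * star (U q.1 a')

section Pi

variable {k : ℕ} {a : Fin k → Type*} [∀ i, Fintype (a i)] [∀ i, DecidableEq (a i)]

/-- Tensor product of `k` matrices. -/
def piKron (U : ∀ i, Matrix (a i) (a i) ℂ) : Matrix (∀ i, a i) (∀ i, a i) ℂ :=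
  fun f g => ∏ i, U i (f i) (g i)

/-- merge assignments on the `true` and `false` fibers of a bit string into a full assignment. -/
def bmerge (b : Fin k → Bool) (f : (i : {i // b i = true}) → a i.1)
    (g : (i : {i // b i = false}) → a i.1) (i : Fin k) : a i :=
  if h : b i = true then f ⟨i, h⟩ else g ⟨i, by simpa using h⟩

/-- marginal of an operator on `(⊗ᵢ Aᵢ) ⊗ E` on the subsystem
`(⊗_{i : bᵢ = 1} Aᵢ) ⊗ E` selected by a bit string `b`. -/
def margB {E : Type*} (b : Fin k → Bool)
    (M : Matrix ((∀ i, a i) × E) ((∀ i, a i) × E) ℂ) :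
    Matrix (((i : {i // b i = true}) → a i.1) × E) (((i : {i // b i = true}) → a i.1) × E) ℂ :=
  fun p q => ∑ g : (i : {i // b i = false}) → a i.1,
    M (bmerge b p.1 g, p.2) (bmerge b q.1 g, q.2)

/-- `⊗ᵢ (F^{AᵢAᵢ'})^{bᵢ}` as an operator on `(⊗ᵢAᵢ) ⊗ (⊗ᵢAᵢ')`. -/
def swapProd (b : Fin k → Bool) :
    Matrix ((∀ i, a i) × (∀ i, a i)) ((∀ i, a i) × (∀ i, a i)) ℂ :=
  fun p q => ∏ i, if b i
    then (if p.1 i = q.2 i ∧ p.2 i = q.1 i then (1 : ℂ) else 0)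
    else (if p.1 i = q.1 i ∧ p.2 i = q.2 i then (1 : ℂ) else 0)

end Pi

/-- Tensor product `S ⊗ T` of two superoperators. -/
def tensorSup {α β α' β' : Type*} [Fintype α] [DecidableEq α] [Fintype α'] [DecidableEq α']
    (S : Matrix α α ℂ → Matrix β β ℂ) (T : Matrix α' α' ℂ → Matrix β' β' ℂ)
    (M : Matrix (α × α') (α × α') ℂ) : Matrix (β × β') (β × β') ℂ :=
  fun p q => ∑ x : α, ∑ y : α, ∑ x' : α', ∑ y' : α',
    M (x, x') (y, y') * S (Matrix.single x y 1) p.1 q.1 *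
      T (Matrix.single x' y' 1) p.2 q.2

/-- Hilbert–Schmidt adjoint of a superoperator. -/
def hsAdj {A E : Type*} [Fintype A] [DecidableEq A] [Fintype E]
    (T : Matrix A A ℂ → Matrix E E ℂ) (Y : Matrix E E ℂ) : Matrix A A ℂ :=
  fun x y => star (Matrix.trace (Yᴴ * T (Matrix.single x y 1)))

end Defs

end QIT

/-!
Split `ρ` into the blocks `ρ_{aa'} = ⟨a|ρ|a'⟩ : B → B`, viewed as vectors with the Frobenius
norm. Then `Tr ρ² = ∑_{a,a'} ‖ρ_{aa'}‖²` and `ρ^B = ∑_a ρ_{aa}`, and both bounds go through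
`(∑_a ‖ρ_{aa}‖)² ≤ |A| ∑_a ‖ρ_{aa}‖²`. For the first, the triangle inequality bounds `‖ρ^B‖` by
`∑_a ‖ρ_{aa}‖`, and the diagonal blocks are part of `Tr ρ²`. For the second, positivity gives
`‖ρ_{aa'}‖² ≤ ‖ρ_{aa}‖ ‖ρ_{a'a'}‖` (write `ρ = S†S`, so `ρ_{aa'} = S_a† S_{a'}`, and apply
Cauchy–Schwarz to `S_a S_a†` and `S_{a'} S_{a'}†`), while the cross terms `Tr ρ_{aa} ρ_{a'a'}` of
`Tr (ρ^B)²` are nonnegative.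
-/

open scoped MatrixOrder InnerProductSpace

namespace Matrix

variable {𝕜 : Type*} [RCLike 𝕜] {l m n : Type*}

def toEuclideanSpace : Matrix m n 𝕜 ≃ₗ[𝕜] EuclideanSpace 𝕜 (m × n) :=
  (LinearEquiv.curry 𝕜 𝕜 m n).symm.trans (WithLp.linearEquiv 2 𝕜 (m × n → 𝕜)).symm

@[simp]
lemma toEuclideanSpace_apply (X : Matrix m n 𝕜) (p : m × n) :
    toEuclideanSpace X p = X p.1 p.2 := rfl

variable [Fintype l] [Fintype m] [Fintype n]

lemma inner_toEuclideanSpace (X Y : Matrix m n 𝕜) :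
    ⟪toEuclideanSpace X, toEuclideanSpace Y⟫_𝕜 = (Xᴴ * Y).trace := by
  simp only [PiLp.inner_apply, toEuclideanSpace_apply, RCLike.inner_apply, Fintype.sum_prod_type,
    trace, diag_apply, mul_apply, conjTranspose_apply]
  exact Finset.sum_comm.trans
    (Finset.sum_congr rfl fun _ _ => Finset.sum_congr rfl fun _ _ => mul_comm _ _)

lemma norm_toEuclideanSpace_sq (X : Matrix m n 𝕜) :
    ‖toEuclideanSpace X‖ ^ 2 = RCLike.re (Xᴴ * X).trace := by
  rw [norm_sq_eq_re_inner (𝕜 := 𝕜), inner_toEuclideanSpace]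

lemma IsHermitian.re_trace_mul_self {M : Matrix n n 𝕜} (hM : M.IsHermitian) :
    RCLike.re (M * M).trace = ‖toEuclideanSpace M‖ ^ 2 := by
  rw [norm_toEuclideanSpace_sq, hM.eq]

lemma norm_toEuclideanSpace_mul_conjTranspose_self (X : Matrix m n 𝕜) :
    ‖toEuclideanSpace (X * Xᴴ)‖ = ‖toEuclideanSpace (Xᴴ * X)‖ := by
  rw [← sq_eq_sq₀ (norm_nonneg _) (norm_nonneg _), norm_toEuclideanSpace_sq,
    norm_toEuclideanSpace_sq]
  simp only [conjTranspose_mul, conjTranspose_conjTranspose, Matrix.mul_assoc]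
  rw [trace_mul_comm X]
  simp only [Matrix.mul_assoc]

lemma norm_toEuclideanSpace_conjTranspose_mul_sq_le (X : Matrix l m 𝕜) (Y : Matrix l n 𝕜) :
    ‖toEuclideanSpace (Xᴴ * Y)‖ ^ 2 ≤
      ‖toEuclideanSpace (Xᴴ * X)‖ * ‖toEuclideanSpace (Yᴴ * Y)‖ := by
  rw [← norm_toEuclideanSpace_mul_conjTranspose_self X,
    ← norm_toEuclideanSpace_mul_conjTranspose_self Y]
  calc ‖toEuclideanSpace (Xᴴ * Y)‖ ^ 2
      = RCLike.re ⟪toEuclideanSpace (X * Xᴴ), toEuclideanSpace (Y * Yᴴ)⟫_𝕜 := by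
        rw [norm_toEuclideanSpace_sq, inner_toEuclideanSpace]
        simp only [conjTranspose_mul, conjTranspose_conjTranspose, Matrix.mul_assoc]
        rw [trace_mul_comm Yᴴ]
        simp only [Matrix.mul_assoc]
    _ ≤ _ := re_inner_le_norm _ _

lemma PosSemidef.re_inner_toEuclideanSpace_nonneg {P Q : Matrix n n 𝕜} (hP : P.PosSemidef)
    (hQ : Q.PosSemidef) : 0 ≤ RCLike.re ⟪toEuclideanSpace P, toEuclideanSpace Q⟫_𝕜 := by
  classical
  obtain ⟨X, rfl⟩ := CStarAlgebra.nonneg_iff_eq_star_mul_self.mp hP.nonneg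
  obtain ⟨Y, rfl⟩ := CStarAlgebra.nonneg_iff_eq_star_mul_self.mp hQ.nonneg
  have hinner : ⟪toEuclideanSpace (star X * X), toEuclideanSpace (star Y * Y)⟫_𝕜 =
      ((Y * Xᴴ)ᴴ * (Y * Xᴴ)).trace := by
    rw [inner_toEuclideanSpace]
    simp only [star_eq_conjTranspose, conjTranspose_mul, conjTranspose_conjTranspose,
      Matrix.mul_assoc]
    rw [trace_mul_comm Xᴴ]
    simp only [Matrix.mul_assoc]
  rw [hinner, ← norm_toEuclideanSpace_sq]
  positivity

lemma PosSemidef.norm_toEuclideanSpace_submatrix_sq_le {M : Matrix n n 𝕜} (hM : M.PosSemidef)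
    (f : l → n) (g : m → n) :
    ‖toEuclideanSpace (M.submatrix f g)‖ ^ 2 ≤
      ‖toEuclideanSpace (M.submatrix f f)‖ * ‖toEuclideanSpace (M.submatrix g g)‖ := by
  classical
  obtain ⟨S, rfl⟩ := CStarAlgebra.nonneg_iff_eq_star_mul_self.mp hM.nonneg
  simp only [submatrix_mul _ _ _ id _ Function.bijective_id, star_eq_conjTranspose,
    ← conjTranspose_submatrix]
  exact norm_toEuclideanSpace_conjTranspose_mul_sq_le _ _

lemma norm_toEuclideanSpace_sq_eq_sum_submatrix {α β γ δ : Type*} [Fintype α] [Fintype β]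
    [Fintype γ] [Fintype δ] (M : Matrix (α × β) (γ × δ) 𝕜) :
    ‖toEuclideanSpace M‖ ^ 2 =
      ∑ a, ∑ c, ‖toEuclideanSpace (M.submatrix (Prod.mk a) (Prod.mk c))‖ ^ 2 := by
  simp only [EuclideanSpace.norm_sq_eq, toEuclideanSpace_apply, Fintype.sum_prod_type,
    submatrix_apply]
  exact Finset.sum_congr rfl fun _ _ => Finset.sum_comm

end Matrix

section InnerProductSpace

variable {𝕜 E ι : Type*} [RCLike 𝕜] [NormedAddCommGroup E] [InnerProductSpace 𝕜 E]

lemma sum_norm_sq_le_norm_sum_sq_of_re_inner_nonneg (s : Finset ι) (v : ι → E)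
    (hv : ∀ i ∈ s, ∀ j ∈ s, 0 ≤ RCLike.re ⟪v i, v j⟫_𝕜) :
    ∑ i ∈ s, ‖v i‖ ^ 2 ≤ ‖∑ i ∈ s, v i‖ ^ 2 := by
  rw [@norm_sq_eq_re_inner 𝕜, sum_inner, map_sum]
  refine Finset.sum_le_sum fun i hi => ?_
  rw [inner_sum, map_sum, @norm_sq_eq_re_inner 𝕜]
  exact Finset.single_le_sum (f := fun j => RCLike.re ⟪v i, v j⟫_𝕜) (hv i hi) hi

end InnerProductSpace

namespace QIT

lemma ptL_eq_sum_submatrix {A B : Type*} [Fintype A] (M : Matrix (A × B) (A × B) ℂ) :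
    ptL M = ∑ a, M.submatrix (Prod.mk a) (Prod.mk a) := by
  ext b b'
  simp [ptL, Matrix.sum_apply]

lemma _root_.Matrix.IsHermitian.ptL {A B : Type*} [Fintype A] {M : Matrix (A × B) (A × B) ℂ}
    (hM : M.IsHermitian) : (ptL M).IsHermitian := by
  rw [ptL_eq_sum_submatrix]
  exact isSelfAdjoint_sum _ fun a _ => hM.submatrix _

end QIT

open QIT in
theorem marginal_purity_bounds_general {A B : Type*} [Fintype A] [Fintype B]
    (ρ : Matrix (A × B) (A × B) ℂ) (hρ : ρ.PosSemidef) :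
    (Matrix.trace (ptL ρ * ptL ρ)).re ≤ (Fintype.card A : ℝ) * (Matrix.trace (ρ * ρ)).re ∧
    (Matrix.trace (ρ * ρ)).re ≤ (Fintype.card A : ℝ) * (Matrix.trace (ptL ρ * ptL ρ)).re := by
  set block : A → A → EuclideanSpace ℂ (B × B) :=
    fun a a' => toEuclideanSpace (ρ.submatrix (Prod.mk a) (Prod.mk a'))
  have hρρ : (ρ * ρ).trace.re = ∑ a, ∑ a', ‖block a a'‖ ^ 2 :=
    hρ.isHermitian.re_trace_mul_self.trans (norm_toEuclideanSpace_sq_eq_sum_submatrix ρ)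
  have hptL : (ptL ρ * ptL ρ).trace.re = ‖∑ a, block a a‖ ^ 2 :=
    hρ.isHermitian.ptL.re_trace_mul_self.trans (by rw [ptL_eq_sum_submatrix, map_sum])
  have hdiag : ∑ a, ‖block a a‖ ^ 2 ≤ ∑ a, ∑ a', ‖block a a'‖ ^ 2 :=
    Finset.sum_le_sum fun a _ =>
      Finset.single_le_sum (f := fun a' => ‖block a a'‖ ^ 2) (fun _ _ => by positivity)
        (Finset.mem_univ a)
  have hcard : (∑ a, ‖block a a‖) ^ 2 ≤ Fintype.card A * ∑ a, ‖block a a‖ ^ 2 :=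
    sq_sum_le_card_mul_sum_sq
  rw [hρρ, hptL]
  constructor
  · calc ‖∑ a, block a a‖ ^ 2 ≤ (∑ a, ‖block a a‖) ^ 2 := by gcongr; exact norm_sum_le _ _
      _ ≤ Fintype.card A * ∑ a, ‖block a a‖ ^ 2 := hcard
      _ ≤ Fintype.card A * ∑ a, ∑ a', ‖block a a'‖ ^ 2 :=
          mul_le_mul_of_nonneg_left hdiag (Nat.cast_nonneg _)
  · calc ∑ a, ∑ a', ‖block a a'‖ ^ 2 ≤ ∑ a, ∑ a', ‖block a a‖ * ‖block a' a'‖ := by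
          gcongr with a _ a' _
          exact hρ.norm_toEuclideanSpace_submatrix_sq_le _ _
      _ = (∑ a, ‖block a a‖) ^ 2 := by rw [sq, Fintype.sum_mul_sum]
      _ ≤ Fintype.card A * ∑ a, ‖block a a‖ ^ 2 := hcard
      _ ≤ Fintype.card A * ‖∑ a, block a a‖ ^ 2 := by
          gcongr
          exact sum_norm_sq_le_norm_sum_sq_of_re_inner_nonneg (𝕜 := ℂ) _ _ fun a _ a' _ =>
            (hρ.submatrix _).re_inner_toEuclideanSpace_nonneg (hρ.submatrix _)

open QIT in
/-- For a nonzero positive semidefinite `ρ^{AB}`,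
`Tr[(ρ^B)²] ≤ |A|·Tr[(ρ^{AB})²]` and `Tr[(ρ^{AB})²] ≤ |A|·Tr[(ρ^B)²]`. -/
theorem marginal_purity_bounds {A B : Type*} [Fintype A] [Fintype B]
    (ρ : Matrix (A × B) (A × B) ℂ) (hρ : ρ.PosSemidef) (hne : ρ ≠ 0) :
    (Matrix.trace (ptL ρ * ptL ρ)).re ≤ (Fintype.card A : ℝ) * (Matrix.trace (ρ * ρ)).re ∧
    (Matrix.trace (ρ * ρ)).re ≤ (Fintype.card A : ℝ) * (Matrix.trace (ptL ρ * ptL ρ)).re :=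
  marginal_purity_bounds_general ρ hρ
end
end

section
/- (Weighted Cauchy–Schwarz bound for the trace norm.) Let M be a linear operator and σ a positive semidefinite operator on a finite-dimensional complex Hilbert space A, and suppose the support of σ contains the column space of M and the column space of M†. Then ‖M‖₁ ≤ √( Tr[σ] · Tr[σ^{-1/4} M σ^{-1/2} M† σ^{-1/4}] ). In particular, if M is Hermitian (with support contained in the support of σ), then ‖M‖₁ ≤ √( Tr[σ] · Tr[(σ^{-1/4} M σ^{-1/4})²] ). -/
open scoped Kronecker ComplexOrder
open MeasureTheory Matrix

noncomputable section

/-! Let `W` be the partial isometry of the polar decomposition, so that `‖M‖₁ = Tr[Wᴴ M]`. Since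
`M` lives on the support of `σ`, the weights cancel in
`Tr[Wᴴ M] = ⟨σ^{1/4} W σ^{1/4}, σ^{-1/4} M σ^{-1/4}⟩` (Hilbert–Schmidt inner product), and
Cauchy–Schwarz bounds it by the product of the two Hilbert–Schmidt norms. The second one squared is
`Tr[σ^{-1/4} M σ^{-1/2} Mᴴ σ^{-1/4}]`; the first one squared is `Tr[Wᴴ σ^{1/2} W σ^{1/2}]`, which a
second Cauchy–Schwarz bounds by `√(Tr[σ WWᴴ] Tr[σ WᴴW]) ≤ Tr σ`, as `WWᴴ` and `WᴴW` are
projections. -/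

namespace QIT

variable {n : Type*} [Fintype n]

lemma re_trace_nonneg_of_posSemidef {A : Matrix n n ℂ} (hA : A.PosSemidef) :
    0 ≤ A.trace.re :=
  (Complex.nonneg_iff.mp hA.trace_nonneg).1

variable [DecidableEq n]

section mpow

variable {σ : Matrix n n ℂ}

lemma mpow_of_isHermitian (h : σ.IsHermitian) (r : ℝ) :
    mpow σ r = (h.eigenvectorUnitary : Matrix n n ℂ) *
      diagonal (fun i =>
        Complex.ofReal (if h.eigenvalues i = 0 then (0 : ℝ) else h.eigenvalues i ^ r)) *
      star (h.eigenvectorUnitary : Matrix n n ℂ) :=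
  dif_pos h

lemma posSemidef_mpow (hσ : σ.PosSemidef) (r : ℝ) : (mpow σ r).PosSemidef := by
  rw [mpow_of_isHermitian hσ.1]
  refine (posSemidef_diagonal_iff.mpr fun i => ?_).mul_mul_conjTranspose_same _
  split_ifs
  · rfl
  · exact Complex.zero_le_real.mpr (Real.rpow_nonneg (hσ.eigenvalues_nonneg i) r)

lemma conjTranspose_mpow (hσ : σ.PosSemidef) (r : ℝ) : (mpow σ r)ᴴ = mpow σ r :=
  (posSemidef_mpow hσ r).1.eq

-- Valid for all exponents, negative ones included, since `mpow` keeps zero eigenvalues at zero.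
lemma mpow_mul_mpow (hσ : σ.PosSemidef) (a b : ℝ) :
    mpow σ a * mpow σ b = mpow σ (a + b) := by
  simp only [mpow_of_isHermitian hσ.1, mul_assoc]
  rw [← mul_assoc (star _) (hσ.1.eigenvectorUnitary : Matrix n n ℂ),
    Unitary.star_mul_self_of_mem hσ.1.eigenvectorUnitary.2, one_mul,
    ← mul_assoc (diagonal _), diagonal_mul_diagonal]
  congr 3
  funext i
  split_ifs with h
  · simp
  · have hpos : 0 < hσ.1.eigenvalues i := (hσ.eigenvalues_nonneg i).lt_of_ne' h
    rw [← Complex.ofReal_mul, Real.rpow_add hpos]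

lemma mpow_one (hσ : σ.PosSemidef) : mpow σ 1 = σ := by
  conv_rhs => rw [hσ.1.spectral_theorem]
  rw [mpow_of_isHermitian hσ.1]
  congr 3
  funext i
  split_ifs with h <;> simp [h]

end mpow

section HilbertSchmidt

lemma norm_trace_conjTranspose_mul_sq_le (X Y : Matrix n n ℂ) :
    ‖(Xᴴ * Y).trace‖ ^ 2 ≤ (Xᴴ * X).trace.re * (Yᴴ * Y).trace.re := by
  let := toMatrixSeminormedAddCommGroup (1 : Matrix n n ℂ) PosSemidef.one
  let := toMatrixInnerProductSpace (1 : Matrix n n ℂ) PosSemidef.one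
  have h := inner_mul_inner_self_le (𝕜 := ℂ) Xᴴ Yᴴ
  have inner_eq : ∀ A B : Matrix n n ℂ, inner ℂ A B = (B * 1 * Aᴴ).trace := fun _ _ => rfl
  have hYX : (Yᴴ * X).trace = star (Xᴴ * Y).trace := by
    rw [← trace_conjTranspose, conjTranspose_mul, conjTranspose_conjTranspose]
  simp only [inner_eq, conjTranspose_conjTranspose, mul_one, hYX, norm_star] at h
  simpa [sq] using h

lemma re_trace_conjTranspose_mul_le (X Y : Matrix n n ℂ) :
    (Xᴴ * Y).trace.re ≤ √((Xᴴ * X).trace.re * (Yᴴ * Y).trace.re) :=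
  (Complex.re_le_norm _).trans <|
    Real.le_sqrt_of_sq_le (norm_trace_conjTranspose_mul_sq_le X Y)

lemma re_trace_mul_le_of_isProj {A Q : Matrix n n ℂ} (hA : A.PosSemidef) (hQ : Qᴴ = Q)
    (hQQ : Q * Q = Q) : (A * Q).trace.re ≤ A.trace.re := by
  have hQc : (1 - Q) * (1 - Q) = 1 - Q := by
    rw [mul_sub, sub_mul, sub_mul, hQQ, one_mul, mul_one, one_mul, sub_self, sub_zero]
  have hgap : ((1 - Q)ᴴ * A * (1 - Q)).trace = A.trace - (A * Q).trace := by
    rw [conjTranspose_sub, conjTranspose_one, hQ, trace_mul_comm, ← mul_assoc, hQc,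
      sub_mul, one_mul, trace_sub, trace_mul_comm Q]
  have hnonneg := re_trace_nonneg_of_posSemidef (hA.conjTranspose_mul_mul_same (1 - Q))
  rw [hgap, Complex.sub_re] at hnonneg
  linarith

lemma re_trace_partialIsometry_le {R W : Matrix n n ℂ} (hR : Rᴴ = R) (hW : W * Wᴴ * W = W) :
    (Wᴴ * R * W * R).trace.re ≤ (R * R).trace.re := by
  have hRR : (R * R).PosSemidef := by simpa [hR] using posSemidef_conjTranspose_mul_self R
  have hrange : ((R * W)ᴴ * (R * W)).trace.re ≤ (R * R).trace.re := by
    have h := re_trace_mul_le_of_isProj hRR (Q := W * Wᴴ)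
      (by rw [conjTranspose_mul, conjTranspose_conjTranspose]) (by rw [← mul_assoc, hW])
    have htrace : ((R * W)ᴴ * (R * W)).trace = (R * R * (W * Wᴴ)).trace := by
      rw [conjTranspose_mul, hR, mul_assoc, trace_mul_comm]
      simp only [mul_assoc]
    rwa [htrace]
  have hsource : ((W * R)ᴴ * (W * R)).trace.re ≤ (R * R).trace.re := by
    have h := re_trace_mul_le_of_isProj hRR (Q := Wᴴ * W)
      (by rw [conjTranspose_mul, conjTranspose_conjTranspose])
      (by rw [mul_assoc, ← mul_assoc W, hW])
    have htrace : ((W * R)ᴴ * (W * R)).trace = (R * R * (Wᴴ * W)).trace := by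
      rw [conjTranspose_mul, hR, trace_mul_comm (R * R), mul_assoc, trace_mul_comm]
      simp only [mul_assoc]
    rwa [htrace]
  calc (Wᴴ * R * W * R).trace.re = ((R * W)ᴴ * (W * R)).trace.re := by
        simp only [conjTranspose_mul, hR, mul_assoc]
    _ ≤ √(((R * W)ᴴ * (R * W)).trace.re * ((W * R)ᴴ * (W * R)).trace.re) :=
        re_trace_conjTranspose_mul_le _ _
    _ ≤ √((R * R).trace.re * (R * R).trace.re) :=
        Real.sqrt_le_sqrt (mul_le_mul hrange hsource
          (re_trace_nonneg_of_posSemidef (posSemidef_conjTranspose_mul_self _))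
          (re_trace_nonneg_of_posSemidef hRR))
    _ = (R * R).trace.re := Real.sqrt_mul_self (re_trace_nonneg_of_posSemidef hRR)

end HilbertSchmidt

section Weighted

variable {σ : Matrix n n ℂ}

lemma exists_partialIsometry_conjTranspose_mul_eq_mpow (M : Matrix n n ℂ) :
    ∃ W : Matrix n n ℂ, W * Wᴴ * W = W ∧ Wᴴ * M = mpow (Mᴴ * M) (1 / 2) := by
  have hP := posSemidef_conjTranspose_mul_self M
  have hpP : mpow (Mᴴ * M) (-(1 / 2)) * (Mᴴ * M) = mpow (Mᴴ * M) (1 / 2) := by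
    have h := mpow_mul_mpow hP (-(1 / 2)) 1
    rw [mpow_one hP] at h
    rw [h]; norm_num
  refine ⟨M * mpow (Mᴴ * M) (-(1 / 2)), ?_, ?_⟩
  · calc M * mpow (Mᴴ * M) (-(1 / 2)) * (M * mpow (Mᴴ * M) (-(1 / 2)))ᴴ *
          (M * mpow (Mᴴ * M) (-(1 / 2)))
        = M * (mpow (Mᴴ * M) (-(1 / 2)) *
            (mpow (Mᴴ * M) (-(1 / 2)) * (Mᴴ * M) * mpow (Mᴴ * M) (-(1 / 2)))) := by
          rw [conjTranspose_mul, conjTranspose_mpow hP]; simp only [mul_assoc]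
      _ = M * mpow (Mᴴ * M) (-(1 / 2)) := by
          rw [hpP, mpow_mul_mpow hP, mpow_mul_mpow hP]; norm_num
  · rw [conjTranspose_mul, conjTranspose_mpow hP, mul_assoc, hpP]

lemma trace_conjTranspose_mul_eq_of_support (hσ : σ.PosSemidef) {M : Matrix n n ℂ}
    (hM : mpow σ 0 * M = M) (hM' : M * mpow σ 0 = M) (X : Matrix n n ℂ) (a : ℝ) :
    (Xᴴ * M).trace = ((mpow σ a * X * mpow σ a)ᴴ * (mpow σ (-a) * M * mpow σ (-a))).trace := by
  have h1 : mpow σ a * mpow σ (-a) = mpow σ 0 := by rw [mpow_mul_mpow hσ, add_neg_cancel]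
  have h2 : mpow σ (-a) * mpow σ a = mpow σ 0 := by rw [mpow_mul_mpow hσ, neg_add_cancel]
  calc (Xᴴ * M).trace
        = (Xᴴ * (mpow σ a * mpow σ (-a)) * M * (mpow σ (-a) * mpow σ a)).trace := by
        rw [h1, h2, mul_assoc Xᴴ, hM, mul_assoc, hM']
    _ = _ := by
        rw [conjTranspose_mul, conjTranspose_mul, conjTranspose_mpow hσ]
        simp only [mul_assoc]
        rw [trace_mul_comm (mpow σ a)]
        simp only [mul_assoc]

lemma mpow_mul_mul_mpow_mul_conjTranspose (hσ : σ.PosSemidef) (M : Matrix n n ℂ) (a b : ℝ) :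
    mpow σ a * M * mpow σ b * (mpow σ a * M * mpow σ b)ᴴ =
      mpow σ a * M * mpow σ (b + b) * Mᴴ * mpow σ a := by
  rw [conjTranspose_mul, conjTranspose_mul, conjTranspose_mpow hσ, conjTranspose_mpow hσ,
    ← mpow_mul_mpow hσ]
  simp only [mul_assoc]

lemma re_trace_weighted_partialIsometry_le (hσ : σ.PosSemidef) {W : Matrix n n ℂ}
    (hW : W * Wᴴ * W = W) :
    ((mpow σ (1 / 4) * W * mpow σ (1 / 4))ᴴ * (mpow σ (1 / 4) * W * mpow σ (1 / 4))).trace.re ≤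
      σ.trace.re := by
  have hquarter : mpow σ (1 / 4) * mpow σ (1 / 4) = mpow σ (1 / 2) := by
    rw [mpow_mul_mpow hσ]; norm_num
  have hhalf : mpow σ (1 / 2) * mpow σ (1 / 2) = σ := by
    rw [mpow_mul_mpow hσ, show (1 / 2 + 1 / 2 : ℝ) = 1 by norm_num, mpow_one hσ]
  have h := re_trace_partialIsometry_le (conjTranspose_mpow hσ (1 / 2)) hW
  rw [hhalf] at h
  convert h using 2
  rw [conjTranspose_mul, conjTranspose_mul, conjTranspose_mpow hσ, ← hquarter]
  simp only [mul_assoc]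
  rw [trace_mul_comm (mpow σ (1 / 4))]
  simp only [mul_assoc]

end Weighted

end QIT

open QIT in
/-- Weighted Cauchy–Schwarz bound for the trace norm:
if the support of the positive semidefinite `σ` contains the column spaces of `M` and `Mᴴ`
(expressed via the support projection `σ⁰ = mpow σ 0`), then
`‖M‖₁ ≤ √(Tr[σ]·Tr[σ^{-1/4} M σ^{-1/2} Mᴴ σ^{-1/4}])`, and if moreover `M` is Hermitian then
`‖M‖₁ ≤ √(Tr[σ]·Tr[(σ^{-1/4} M σ^{-1/4})²])`. -/
theorem weighted_cauchy_schwarz_trace_norm {A : Type*} [Fintype A] [DecidableEq A]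
    (M σ : Matrix A A ℂ) (hσ : σ.PosSemidef)
    (hsupp : mpow σ 0 * M = M) (hsupp' : mpow σ 0 * Mᴴ = Mᴴ) :
    traceNorm M ≤ Real.sqrt ((Matrix.trace σ).re *
        (Matrix.trace (mpow σ (-(1/4)) * M * mpow σ (-(1/2)) * Mᴴ * mpow σ (-(1/4)))).re) ∧
      (M.IsHermitian → traceNorm M ≤ Real.sqrt ((Matrix.trace σ).re *
        (Matrix.trace ((mpow σ (-(1/4)) * M * mpow σ (-(1/4))) *
          (mpow σ (-(1/4)) * M * mpow σ (-(1/4))))).re)) := by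
  have hsupp_right : M * mpow σ 0 = M := by
    simpa [conjTranspose_mul, conjTranspose_mpow hσ] using congrArg conjTranspose hsupp'
  obtain ⟨W, hW, hWM⟩ := exists_partialIsometry_conjTranspose_mul_eq_mpow M
  set N := mpow σ (-(1/4)) * M * mpow σ (-(1/4))
  have hNN : N * Nᴴ = mpow σ (-(1/4)) * M * mpow σ (-(1/2)) * Mᴴ * mpow σ (-(1/4)) := by
    rw [mpow_mul_mul_mpow_mul_conjTranspose hσ]; norm_num
  have hbound : traceNorm M ≤ √(σ.trace.re * (N * Nᴴ).trace.re) := by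
    set X := mpow σ (1/4) * W * mpow σ (1/4)
    calc traceNorm M = (Xᴴ * N).trace.re := by
          rw [traceNorm, ← hWM,
            trace_conjTranspose_mul_eq_of_support hσ hsupp hsupp_right W (1/4)]
      _ ≤ √((Xᴴ * X).trace.re * (Nᴴ * N).trace.re) := re_trace_conjTranspose_mul_le X N
      _ ≤ √(σ.trace.re * (N * Nᴴ).trace.re) := by
          rw [trace_mul_comm Nᴴ]
          exact Real.sqrt_le_sqrt <| mul_le_mul_of_nonneg_right
            (re_trace_weighted_partialIsometry_le hσ hW)
            (re_trace_nonneg_of_posSemidef (posSemidef_self_mul_conjTranspose N))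
  refine ⟨hNN ▸ hbound, fun hM => ?_⟩
  have hNH : Nᴴ = N := by
    simp only [N, conjTranspose_mul, conjTranspose_mpow hσ, hM.eq, mul_assoc]
  rwa [hNH] at hbound
end
end

section
/- (Choi-state 2-norm identity.) Let T̃: L(A₀⊗…⊗A_{k−1})→L(E) be a CP map with Choi state ω̃ := (I⊗T̃)(⊗_{i} Φ^{Â_iA_i}) on Â₀⊗…⊗Â_{k−1}⊗E, and let T̃† denote its Hilbert–Schmidt adjoint. Then for every bit string b ∈ {0,1}^k, Tr[ (⊗_{i} (F^{A_iA_i'})^{b_i}) · (T̃†⊗T̃†)(F^{EE'}) ] = (∏_i |A_i|)² · Tr[(ω̃^{Â^b E})²], where A_i' ≅ A_i and E' ≅ E are copies on which the second tensor factor acts, (F^{A_iA_i'})^{0} := I^{A_iA_i'}, and Â^b denotes the subsystem consisting of those Â_i with b_i = 1 (so ω̃^{Â^b E} is the marginal of ω̃ on those Â_i together with E). -/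
open scoped Kronecker ComplexOrder
open MeasureTheory Matrix

noncomputable section

/-! The swap-operator trick: `⊗ᵢ(F^{AᵢAᵢ'})^{bᵢ}` is the permutation matrix of the map `condSwap b`
exchanging the `Aᵢ` and `Aᵢ'` coordinates with `bᵢ = 1`, so the left-hand side is a sum of
products of two matrix entries of `T̃†`. Since `T̃` is CP its Choi matrix is Hermitian, which turns
entries of `T̃†` into entries of `T̃`, i.e. of `|A|·ω̃`. Splitting each index of `⊗ᵢAᵢ` into its
kept part (`bᵢ = 1`) and its traced-out part, the same sum is `Tr[(ω̃^{Â^bE})²]` written out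
entrywise. -/

namespace QIT

section Pi

variable {k : ℕ} {a : Fin k → Type*}

def bmergeEquiv (b : Fin k → Bool) :
    ((i : {i // b i = true}) → a i.1) × ((i : {i // b i = false}) → a i.1) ≃ (∀ i, a i) where
  toFun p := bmerge b p.1 p.2
  invFun f := (fun i => f i.1, fun i => f i.1)
  left_inv p := by ext i <;> simp [bmerge, i.2]
  right_inv f := by
    funext i
    by_cases h : b i <;> simp [bmerge, h]

def condSwap (b : Fin k → Bool) (p : (∀ i, a i) × (∀ i, a i)) : (∀ i, a i) × (∀ i, a i) :=
  (fun i => if b i then p.2 i else p.1 i, fun i => if b i then p.1 i else p.2 i)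

theorem condSwap_involutive (b : Fin k → Bool) : Function.Involutive (condSwap (a := a) b) := by
  intro p
  ext i <;> by_cases hb : b i <;> simp [condSwap, hb]

theorem condSwap_bmerge (b : Fin k → Bool) (u v : (i : {i // b i = true}) → a i.1)
    (g h : (i : {i // b i = false}) → a i.1) :
    condSwap b (bmerge b u g, bmerge b v h) = (bmerge b v g, bmerge b u h) := by
  ext i <;> by_cases hb : b i <;> simp [condSwap, bmerge, hb]

theorem trace_margB_mul_self [∀ i, Fintype (a i)] {E : Type*} [Fintype E] (b : Fin k → Bool)
    (N : Matrix ((∀ i, a i) × E) ((∀ i, a i) × E) ℂ) :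
    (margB b N * margB b N).trace
      = ∑ p, ∑ x, ∑ x', N (p.1, x) ((condSwap b p).1, x') * N (p.2, x') ((condSwap b p).2, x) := by
  rw [Fintype.sum_prod_type, ← (bmergeEquiv b).sum_comp]
  simp_rw [← (bmergeEquiv b).sum_comp]
  simp only [bmergeEquiv, Equiv.coe_fn_mk, condSwap_bmerge, Fintype.sum_prod_type, trace, diag,
    mul_apply, margB, Finset.sum_mul_sum]
  -- Pushing `E`-sums inside all others and kept-index sums inside discarded-index sums
  -- terminates, and brings both sides to the same order of summation.
  simp only [Finset.sum_comm (γ := E) (α := (i : {i // b i = true}) → a i.1),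
    Finset.sum_comm (γ := E) (α := (i : {i // b i = false}) → a i.1),
    Finset.sum_comm (γ := (i : {i // b i = true}) → a i.1) (α := (i : {i // b i = false}) → a i.1)]

variable [∀ i, DecidableEq (a i)]

theorem swapProd_eq_toMatrix (b : Fin k → Bool) :
    swapProd (a := a) b = (condSwap_involutive b).toPerm.toPEquiv.toMatrix := by
  ext p q
  have hfactor : ∀ i, (if b i
      then (if p.1 i = q.2 i ∧ p.2 i = q.1 i then (1 : ℂ) else 0)
      else (if p.1 i = q.1 i ∧ p.2 i = q.2 i then (1 : ℂ) else 0))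
      = if (condSwap b p).1 i = q.1 i ∧ (condSwap b p).2 i = q.2 i then 1 else 0 := by
    intro i
    by_cases hb : b i <;> simp [condSwap, hb, and_comm]
  simp only [swapProd, hfactor, Fintype.prod_boole, PEquiv.toMatrix_apply, Equiv.toPEquiv_apply,
    Option.mem_def, Option.some_inj, Function.Involutive.coe_toPerm, Prod.ext_iff, funext_iff,
    forall_and]

theorem trace_swapProd_mul [∀ i, Fintype (a i)] (b : Fin k → Bool)
    (M : Matrix ((∀ i, a i) × (∀ i, a i)) ((∀ i, a i) × (∀ i, a i)) ℂ) :
    (swapProd b * M).trace = ∑ p, M (condSwap b p) p := by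
  rw [swapProd_eq_toMatrix, PEquiv.toMatrix_toPEquiv_mul]
  rfl

end Pi

variable {F E : Type*} [Fintype F] [DecidableEq F]

theorem card_sq_mul_choi_mul_choi (T : Matrix F F ℂ → Matrix E E ℂ) (f g f' g' : F)
    (x y x' y' : E) :
    (Fintype.card F : ℂ) ^ 2 * (choi T (f, x) (g, y) * choi T (f', x') (g', y'))
      = T (single f g 1) x y * T (single f' g' 1) x' y' := by
  have : Nonempty F := ⟨f⟩
  have hd : (Fintype.card F : ℂ) ≠ 0 := Nat.cast_ne_zero.mpr Fintype.card_ne_zero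
  simp only [choi]
  field_simp

variable [Fintype E]

theorem IsCPMap.star_apply_single {T : Matrix F F ℂ → Matrix E E ℂ} (hT : IsCPMap T)
    (u v : F) (x y : E) : star (T (single u v 1) x y) = T (single v u 1) y x := by
  let e := Fintype.equivFin F
  let ψ : F × Fin (Fintype.card F) → ℂ := fun p => if e p.1 = p.2 then 1 else 0
  have hslice : ∀ u v : F,
      (fun a b => vecMulVec ψ (star ψ) (a, e u) (b, e v)) = single u v 1 := by
    intro u v
    ext a b
    simp only [ψ, vecMulVec_apply, Pi.star_apply, apply_ite star, star_one, star_zero,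
      ite_zero_mul_ite_zero, mul_one, e.injective.eq_iff, single_apply, eq_comm]
  -- `vecMulVec ψ (star ψ)` is the unnormalised maximally entangled projector, so its image
  -- under `T ⊗ id` is `|F|` times the Choi matrix of `T`, which is therefore Hermitian.
  have hherm := (hT.2 _ _ (posSemidef_vecMulVec_self_star ψ)).1.apply (y, e v) (x, e u)
  simpa only [matExt, hslice] using hherm

variable [DecidableEq E]

theorem hsAdj_single_apply (T : Matrix F F ℂ → Matrix E E ℂ) (x y : E) (u v : F) :
    hsAdj T (single x y 1) u v = star (T (single u v 1) x y) := by
  simp [hsAdj, conjTranspose_single, trace_single_mul]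

theorem tensorSup_hsAdj_swapOp_apply (T : Matrix F F ℂ → Matrix E E ℂ) (p q : F × F) :
    tensorSup (hsAdj T) (hsAdj T) (swapOp E) p q
      = ∑ x, ∑ x', star (T (single p.1 q.1 1) x x') * star (T (single p.2 q.2 1) x' x) := by
  simp [tensorSup, swapOp, hsAdj_single_apply, ite_and]

end QIT

open QIT in
/-- Choi-state 2-norm identity: for a CP map `T̃` with Choi state `ω̃`
and every bit string `b ∈ {0,1}^k`,
`Tr[(⊗ᵢ(F^{AᵢAᵢ'})^{bᵢ})·(T̃†⊗T̃†)(F^{EE'})] = (∏ᵢ|Aᵢ|)²·Tr[(ω̃^{Â^bE})²]`. -/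
theorem choi_two_norm_identity {k : ℕ} {A : Fin k → Type*} [∀ i, Fintype (A i)]
    [∀ i, DecidableEq (A i)] {E : Type*} [Fintype E] [DecidableEq E]
    (T : Matrix (∀ i, A i) (∀ i, A i) ℂ → Matrix E E ℂ) (hT : IsCPMap T)
    (b : Fin k → Bool) :
    Matrix.trace (swapProd (a := A) b * tensorSup (hsAdj T) (hsAdj T) (swapOp E))
      = (∏ i, (Fintype.card (A i) : ℂ)) ^ 2 *
        Matrix.trace (margB b (choi T) * margB b (choi T)) := by
  have hcard : ∏ i, (Fintype.card (A i) : ℂ) = Fintype.card (∀ i, A i) := by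
    rw [Fintype.card_pi, Nat.cast_prod]
  rw [trace_swapProd_mul, trace_margB_mul_self, hcard, Finset.mul_sum]
  refine Fintype.sum_congr _ _ fun p => ?_
  rw [tensorSup_hsAdj_swapOp_apply, Finset.sum_comm, Finset.mul_sum]
  refine Fintype.sum_congr _ _ fun x => ?_
  rw [Finset.mul_sum]
  refine Fintype.sum_congr _ _ fun x' => ?_
  rw [hT.star_apply_single, hT.star_apply_single, card_sq_mul_choi_mul_choi]
end
end
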